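/- For every p > 1, every function of bounded partial p-variation has bounded harmonic variation: PBV_p ⊆ HBV. That is, if sup_y sup ∑_i |f(I_i,y)|^p < ∞ and sup_x sup ∑_j |f(x,J_j)|^p < ∞ (suprema over finite families of pairwise nonoverlapping subintervals of [0,2π]), then HV_1(f)+HV_2(f)+HV_{1,2}(f) < ∞. -/

import Mathlib

open Real Filter Topology MeasureTheory
open scoped ENNReal NNReal BigOperators

noncomputable section

/-- `f` is `2π`-periodic in each variable. -/
def Periodic2 (f : ℝ → ℝ → ℝ) : Prop :=
  ∀ x y : ℝ, f (x + 2 * π) y = f x y ∧ f x (y + 2 * π) = f x y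

/-- A finite family of pairwise nonoverlapping (nondegenerate) subintervals of `[0, 2π]`,
each interval given by its pair (left endpoint, right endpoint). -/
def Nonoverlapping {n : ℕ} (I : Fin n → ℝ × ℝ) : Prop :=
  (∀ i, 0 ≤ (I i).1 ∧ (I i).1 < (I i).2 ∧ (I i).2 ≤ 2 * π) ∧
  (∀ i j, i ≠ j → (I i).2 ≤ (I j).1 ∨ (I j).2 ≤ (I i).1)

/-- `f(I, y) = f(b, y) - f(a, y)` for `I = (a, b)`. -/
def incr1 (f : ℝ → ℝ → ℝ) (I : ℝ × ℝ) (y : ℝ) : ℝ := f I.2 y - f I.1 y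

/-- `f(x, J) = f(x, d) - f(x, c)` for `J = (c, d)`. -/
def incr2 (f : ℝ → ℝ → ℝ) (x : ℝ) (J : ℝ × ℝ) : ℝ := f x J.2 - f x J.1

/-- The mixed difference `f(I, J)` for `I = (a, b)`, `J = (c, d)`. -/
def incr12 (f : ℝ → ℝ → ℝ) (I J : ℝ × ℝ) : ℝ :=
  f I.1 J.1 - f I.1 J.2 - f I.2 J.1 + f I.2 J.2

/-- `ΛV₁(f)`: the partial `Λ`-variation of `f` in the first variable. -/
def Var1 (Λ : ℕ → ℝ) (f : ℝ → ℝ → ℝ) : ℝ≥0∞ :=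
  ⨆ (y : ℝ) (n : ℕ) (I : {I : Fin n → ℝ × ℝ // Nonoverlapping I}),
    ∑ i : Fin n, ENNReal.ofReal (|incr1 f (I.1 i) y| / Λ (i.1 + 1))

/-- `ΛV₂(f)`: the partial `Λ`-variation of `f` in the second variable. -/
def Var2 (Λ : ℕ → ℝ) (f : ℝ → ℝ → ℝ) : ℝ≥0∞ :=
  ⨆ (x : ℝ) (m : ℕ) (J : {J : Fin m → ℝ × ℝ // Nonoverlapping J}),
    ∑ j : Fin m, ENNReal.ofReal (|incr2 f x (J.1 j)| / Λ (j.1 + 1))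

/-- `ΛV₁,₂(f)`: the mixed `Λ`-variation of `f`. -/
def Var12 (Λ : ℕ → ℝ) (f : ℝ → ℝ → ℝ) : ℝ≥0∞ :=
  ⨆ (n : ℕ) (m : ℕ) (I : {I : Fin n → ℝ × ℝ // Nonoverlapping I})
    (J : {J : Fin m → ℝ × ℝ // Nonoverlapping J}),
    ∑ i : Fin n, ∑ j : Fin m,
      ENNReal.ofReal (|incr12 f (I.1 i) (J.1 j)| / (Λ (i.1 + 1) * Λ (j.1 + 1)))

/-- The harmonic sequence `λ_n = n` (giving harmonic variation `HV`). -/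
def harmonicSeq : ℕ → ℝ := fun n => (n : ℝ)

/-- The constant sequence `λ_n = 1` (giving ordinary (Hardy) variation). -/
def oneSeq : ℕ → ℝ := fun _ => 1

/-- The partial modulus of variation `v₁(n, f)`. -/
def modulus1 (f : ℝ → ℝ → ℝ) (n : ℕ) : ℝ≥0∞ :=
  ⨆ (y : ℝ) (I : {I : Fin n → ℝ × ℝ // Nonoverlapping I}),
    ∑ i : Fin n, ENNReal.ofReal |incr1 f (I.1 i) y|

/-- The partial modulus of variation `v₂(m, f)`. -/
def modulus2 (f : ℝ → ℝ → ℝ) (m : ℕ) : ℝ≥0∞ :=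
  ⨆ (x : ℝ) (J : {J : Fin m → ℝ × ℝ // Nonoverlapping J}),
    ∑ j : Fin m, ENNReal.ofReal |incr2 f x (J.1 j)|

/-- The `Λ`-variation of a function of one variable on `[0, 2π]`. -/
def VarG (Λ : ℕ → ℝ) (g : ℝ → ℝ) : ℝ≥0∞ :=
  ⨆ (n : ℕ) (I : {I : Fin n → ℝ × ℝ // Nonoverlapping I}),
    ∑ i : Fin n, ENNReal.ofReal (|g (I.1 i).2 - g (I.1 i).1| / Λ (i.1 + 1))

/-- The norm `‖f‖_C + ΛV₁(f) + ΛV₂(f)` (with values in `ℝ≥0∞`). -/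
def PNorm (Λ : ℕ → ℝ) (f : ℝ → ℝ → ℝ) : ℝ≥0∞ :=
  (⨆ (x : ℝ) (y : ℝ), ENNReal.ofReal |f x y|) + Var1 Λ f + Var2 Λ f

/-- The Fourier coefficient `f̂(m, n)` of a (`2π`-periodic in each variable) function. -/
def fourierCoef (f : ℝ → ℝ → ℝ) (m n : ℤ) : ℂ :=
  (1 / (4 * (π : ℂ) ^ 2)) *
    ∫ x in (0:ℝ)..(2 * π), ∫ y in (0:ℝ)..(2 * π),
      (f x y : ℂ) * Complex.exp (-Complex.I * m * x) * Complex.exp (-Complex.I * n * y)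

/-- The rectangular partial sum `S_{M,N}[f](x, y)` of the double Fourier series of `f`. -/
def partialSum (f : ℝ → ℝ → ℝ) (M N : ℕ) (x y : ℝ) : ℂ :=
  ∑ m ∈ Finset.Icc (-(M : ℤ)) (M : ℤ), ∑ n ∈ Finset.Icc (-(N : ℤ)) (N : ℤ),
    fourierCoef f m n * Complex.exp (Complex.I * m * x) * Complex.exp (Complex.I * n * y)

/-- Pringsheim convergence of the rectangular partial sums at `(x, y)` to `L`. -/
def PringsheimConv (f : ℝ → ℝ → ℝ) (x y L : ℝ) : Prop :=
  ∀ ε : ℝ, 0 < ε → ∃ N₀ : ℕ, ∀ M N : ℕ, N₀ ≤ M → N₀ ≤ N →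
    ‖partialSum f M N x y - (L : ℂ)‖ < ε

/-- The four open-quadrant limits `f(x±0, y±0)` exist and equal `Lpp, Lpm, Lmp, Lmm`. -/
def QuadLimits (f : ℝ → ℝ → ℝ) (x y Lpp Lpm Lmp Lmm : ℝ) : Prop :=
  Tendsto (fun p : ℝ × ℝ => f p.1 p.2) ((𝓝[>] x) ×ˢ (𝓝[>] y)) (𝓝 Lpp) ∧
  Tendsto (fun p : ℝ × ℝ => f p.1 p.2) ((𝓝[>] x) ×ˢ (𝓝[<] y)) (𝓝 Lpm) ∧
  Tendsto (fun p : ℝ × ℝ => f p.1 p.2) ((𝓝[<] x) ×ˢ (𝓝[>] y)) (𝓝 Lmp) ∧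
  Tendsto (fun p : ℝ × ℝ => f p.1 p.2) ((𝓝[<] x) ×ˢ (𝓝[<] y)) (𝓝 Lmm)


/-!
With `q` the exponent conjugate to `p`, Young's inequality gives `aᵢ / i ≤ aᵢ ^ p / p + i ^ (-q) / q`,
and `∑ i ^ (-q) < ∞`; this bounds both partial harmonic variations by the partial `p`-variations.
For the mixed one, `|f(I, J)| ≤ |f(I, d)| + |f(I, c)|` bounds the `p`-th power sums of the mixed
differences along every row and column of the grid `(Iᵢ, Jⱼ)`. Young's inequality applied after
splitting off the weight `(ij) ^ (-3/4) ≤ i ^ (-3/2) + j ^ (-3/2)` then bounds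
`∑ |f(Iᵢ, Jⱼ)| / (ij)` by these row and column sums and by `(∑ i ^ (-(q + 3)/4))²`.
-/

def zetaSum (s : ℝ) : ℝ := ∑' k : ℕ, ((k : ℝ) + 1) ^ (-s)

theorem zetaSum_nonneg (s : ℝ) : 0 ≤ zetaSum s :=
  tsum_nonneg fun k => by positivity

theorem sum_fin_rpow_neg_le_zetaSum {s : ℝ} (hs : 1 < s) (n : ℕ) :
    ∑ i : Fin n, ((i : ℕ) + 1 : ℝ) ^ (-s) ≤ zetaSum s := by
  have hsum : Summable fun k : ℕ => ((k : ℝ) + 1) ^ (-s) := by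
    refine ((summable_nat_add_iff 1).2 (Real.summable_nat_rpow_inv.2 hs)).congr fun k => ?_
    push_cast
    rw [Real.rpow_neg (by positivity)]
  rw [Fin.sum_univ_eq_sum_range (fun k => ((k : ℝ) + 1) ^ (-s))]
  exact hsum.sum_le_tsum _ fun k _ => by positivity

theorem div_le_young_rpow {p q s t a r : ℝ} (hpq : p.HolderConjugate q) (ha : 0 ≤ a)
    (hr : 0 < r) (hst : s / p + t / q = 1) :
    a / r ≤ a ^ p * r ^ (-s) / p + r ^ (-t) / q := by
  have hprod : a * r ^ (-s / p) * r ^ (-t / q) = a / r := by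
    rw [mul_assoc, ← Real.rpow_add hr, show -s / p + -t / q = -1 by linear_combination -hst,
      Real.rpow_neg_one, div_eq_mul_inv]
  have hpow_p : (a * r ^ (-s / p)) ^ p = a ^ p * r ^ (-s) := by
    rw [Real.mul_rpow ha (by positivity), ← Real.rpow_mul hr.le,
      div_mul_cancel₀ _ hpq.ne_zero]
  have hpow_q : (r ^ (-t / q)) ^ q = r ^ (-t) := by
    rw [← Real.rpow_mul hr.le, div_mul_cancel₀ _ hpq.symm.ne_zero]
  rw [← hprod, ← hpow_p, ← hpow_q]
  exact Real.young_inequality_of_nonneg (by positivity) (by positivity) hpq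

theorem mul_rpow_neg_le_rpow_neg_add {x y : ℝ} (hx : 0 ≤ x) (hy : 0 ≤ y) (s : ℝ) :
    (x * y) ^ (-s) ≤ x ^ (-(2 * s)) + y ^ (-(2 * s)) := by
  have hsq : ∀ z : ℝ, 0 ≤ z → z ^ (-(2 * s)) = (z ^ (-s)) ^ 2 := fun z hz => by
    rw [← Real.rpow_natCast, ← Real.rpow_mul hz]; ring_nf
  rw [Real.mul_rpow hx hy, hsq x hx, hsq y hy]
  nlinarith [two_mul_le_add_sq (x ^ (-s)) (y ^ (-s)), Real.rpow_nonneg hx (-s),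
    Real.rpow_nonneg hy (-s)]

theorem abs_sub_rpow_le {p : ℝ} (hp : 1 ≤ p) (a b : ℝ) :
    |a - b| ^ p ≤ 2 ^ (p - 1) * (|a| ^ p + |b| ^ p) := by
  have hab : |a - b| ^ p ≤ (|a| + |b|) ^ p := by gcongr; exact abs_sub _ _
  refine hab.trans ?_
  lift |a| to ℝ≥0 using abs_nonneg a with u
  lift |b| to ℝ≥0 using abs_nonneg b with v
  exact_mod_cast NNReal.rpow_add_le_mul_rpow_add_rpow u v hp

theorem sum_div_succ_le {p q : ℝ} (hpq : p.HolderConjugate q) {n : ℕ} (a : Fin n → ℝ)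
    (ha : ∀ i, 0 ≤ a i) :
    ∑ i, a i / ((i : ℕ) + 1 : ℝ) ≤ (∑ i, a i ^ p) / p + zetaSum q / q := by
  have hterm : ∀ i : Fin n, a i / ((i : ℕ) + 1 : ℝ) ≤ a i ^ p / p + ((i : ℕ) + 1 : ℝ) ^ (-q) / q :=
    fun i => by
      simpa using div_le_young_rpow hpq (ha i) (by positivity) (s := 0) (t := q)
        (by simp [hpq.symm.ne_zero])
  have hq := hpq.symm.pos
  calc ∑ i, a i / ((i : ℕ) + 1 : ℝ)
      ≤ ∑ i, (a i ^ p / p + ((i : ℕ) + 1 : ℝ) ^ (-q) / q) := Finset.sum_le_sum fun i _ => hterm i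
    _ = (∑ i, a i ^ p) / p + (∑ i : Fin n, ((i : ℕ) + 1 : ℝ) ^ (-q)) / q := by
      rw [Finset.sum_add_distrib, Finset.sum_div, Finset.sum_div]
    _ ≤ (∑ i, a i ^ p) / p + zetaSum q / q := by
      gcongr
      exact sum_fin_rpow_neg_le_zetaSum hpq.symm.lt n

theorem div_mul_le_young_weighted {p q a x y : ℝ} (hpq : p.HolderConjugate q) (ha : 0 ≤ a)
    (hx : 0 < x) (hy : 0 < y) :
    a / (x * y) ≤ (x ^ (-(3 / 2 : ℝ)) * a ^ p + y ^ (-(3 / 2 : ℝ)) * a ^ p) / p +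
      x ^ (-((q + 3) / 4)) * y ^ (-((q + 3) / 4)) / q := by
  have hp := hpq.pos
  have hq := hpq.symm.pos
  have hst : 3 / 4 / p + (q + 3) / 4 / q = 1 := by
    have := hpq.inv_add_inv_eq_one
    field_simp at this ⊢
    linear_combination 3 * this
  have hweight := mul_rpow_neg_le_rpow_neg_add hx.le hy.le (3 / 4)
  norm_num at hweight
  calc a / (x * y) ≤ a ^ p * (x * y) ^ (-(3 / 4 : ℝ)) / p + (x * y) ^ (-((q + 3) / 4)) / q :=
        div_le_young_rpow hpq ha (by positivity) hst
    _ ≤ _ := by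
        rw [Real.mul_rpow hx.le hy.le (z := -((q + 3) / 4))]
        gcongr
        linarith [mul_le_mul_of_nonneg_left hweight (Real.rpow_nonneg ha p)]

theorem sum_sum_div_succ_mul_succ_le {p q : ℝ} (hpq : p.HolderConjugate q) {n m : ℕ}
    (A : Fin n → Fin m → ℝ) (hA : ∀ i j, 0 ≤ A i j) {R K : ℝ} (hR : 0 ≤ R) (hK : 0 ≤ K)
    (hrow : ∀ i, ∑ j, A i j ^ p ≤ R) (hcol : ∀ j, ∑ i, A i j ^ p ≤ K) :
    ∑ i, ∑ j, A i j / (((i : ℕ) + 1 : ℝ) * ((j : ℕ) + 1 : ℝ)) ≤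
      (R + K) * zetaSum (3 / 2) / p + zetaSum ((q + 3) / 4) ^ 2 / q := by
  set γ := (q + 3) / 4
  set w : ℝ → ℕ → ℝ := fun s k => ((k : ℝ) + 1) ^ (-s)
  have hp := hpq.pos
  have hq := hpq.symm.pos
  have hw_sum : ∀ s, 1 < s → ∀ N, ∑ i : Fin N, w s i ≤ zetaSum s :=
    fun s hs N => sum_fin_rpow_neg_le_zetaSum hs N
  have hγ : 1 < γ := by simp only [γ]; linarith [hpq.symm.lt]
  calc _ ≤ ∑ i : Fin n, ∑ j : Fin m, ((w (3 / 2) i * A i j ^ p + w (3 / 2) j * A i j ^ p) / p +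
          w γ i * w γ j / q) := by
        gcongr with i _ j _
        exact div_mul_le_young_weighted hpq (hA i j) (by positivity) (by positivity)
    _ = ((∑ i : Fin n, w (3 / 2) i * ∑ j, A i j ^ p) +
          ∑ j : Fin m, w (3 / 2) j * ∑ i, A i j ^ p) / p +
          (∑ i : Fin n, w γ i) * (∑ j : Fin m, w γ j) / q := by
        simp only [Finset.sum_add_distrib, ← Finset.sum_div, Finset.mul_sum, Finset.sum_mul]
        rw [Finset.sum_comm (f := fun (i : Fin n) (j : Fin m) => w (3 / 2) j * A i j ^ p),
          Finset.sum_comm (f := fun (i : Fin n) (j : Fin m) => w γ i * w γ j)]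
    _ ≤ ((∑ i : Fin n, w (3 / 2) i * R) + ∑ j : Fin m, w (3 / 2) j * K) / p +
          zetaSum γ * zetaSum γ / q := by
        gcongr with i _ j _
        · exact hrow i
        · exact hcol j
        · exact zetaSum_nonneg γ
        · exact hw_sum γ hγ n
        · exact hw_sum γ hγ m
    _ ≤ (zetaSum (3 / 2) * R + zetaSum (3 / 2) * K) / p + zetaSum γ * zetaSum γ / q := by
        simp only [← Finset.sum_mul]
        gcongr <;> exact hw_sum _ (by norm_num) _
    _ = _ := by ring

def PVar1LE (p : ℝ) (f : ℝ → ℝ → ℝ) (C : ℝ) : Prop :=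
  ∀ (y : ℝ) (n : ℕ) (I : Fin n → ℝ × ℝ), Nonoverlapping I → ∑ i, |incr1 f (I i) y| ^ p ≤ C

theorem nonoverlapping_fin_zero (I : Fin 0 → ℝ × ℝ) : Nonoverlapping I :=
  ⟨fun i => i.elim0, fun i => i.elim0⟩

theorem PVar1LE.nonneg {p C : ℝ} {f : ℝ → ℝ → ℝ} (hf : PVar1LE p f C) : 0 ≤ C := by
  simpa using hf 0 0 Fin.elim0 (nonoverlapping_fin_zero _)

theorem incr12_eq_incr1_sub (f : ℝ → ℝ → ℝ) (I J : ℝ × ℝ) :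
    incr12 f I J = incr1 f I J.2 - incr1 f I J.1 := by
  simp only [incr12, incr1]; ring

theorem incr12_flip (f : ℝ → ℝ → ℝ) (I J : ℝ × ℝ) : incr12 (flip f) J I = incr12 f I J := by
  simp only [incr12, flip]; ring

theorem PVar1LE.sum_abs_incr12_rpow_le {p C : ℝ} {f : ℝ → ℝ → ℝ} (hp : 1 ≤ p)
    (hf : PVar1LE p f C) (J : ℝ × ℝ) {n : ℕ} (I : Fin n → ℝ × ℝ) (hI : Nonoverlapping I) :
    ∑ i, |incr12 f (I i) J| ^ p ≤ 2 ^ (p - 1) * (C + C) := by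
  calc ∑ i, |incr12 f (I i) J| ^ p
      ≤ ∑ i, 2 ^ (p - 1) * (|incr1 f (I i) J.2| ^ p + |incr1 f (I i) J.1| ^ p) := by
        gcongr with i
        rw [incr12_eq_incr1_sub]
        exact abs_sub_rpow_le hp _ _
    _ = 2 ^ (p - 1) * (∑ i, |incr1 f (I i) J.2| ^ p + ∑ i, |incr1 f (I i) J.1| ^ p) := by
        rw [← Finset.mul_sum, Finset.sum_add_distrib]
    _ ≤ 2 ^ (p - 1) * (C + C) := by
        gcongr
        · exact hf J.2 n I hI
        · exact hf J.1 n I hI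

theorem var2_eq_var1_flip (Λ : ℕ → ℝ) (f : ℝ → ℝ → ℝ) : Var2 Λ f = Var1 Λ (flip f) := rfl

theorem harmonicSeq_succ (k : ℕ) : harmonicSeq (k + 1) = (k : ℝ) + 1 := by
  simp [harmonicSeq]

theorem var1_harmonicSeq_le {p q C : ℝ} {f : ℝ → ℝ → ℝ} (hpq : p.HolderConjugate q)
    (hf : PVar1LE p f C) :
    Var1 harmonicSeq f ≤ ENNReal.ofReal (C / p + zetaSum q / q) := by
  refine iSup_le fun y => iSup_le fun n => iSup_le fun I => ?_
  simp only [harmonicSeq_succ]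
  rw [← ENNReal.ofReal_sum_of_nonneg fun i _ => by positivity]
  refine ENNReal.ofReal_le_ofReal ((sum_div_succ_le hpq _ fun i => abs_nonneg _).trans ?_)
  have hp := hpq.pos
  gcongr
  exact hf y n I.1 I.2

theorem var12_harmonicSeq_le {p q C₁ C₂ : ℝ} {f : ℝ → ℝ → ℝ} (hpq : p.HolderConjugate q)
    (hf₁ : PVar1LE p f C₁) (hf₂ : PVar1LE p (flip f) C₂) :
    Var12 harmonicSeq f ≤ ENNReal.ofReal
      ((2 ^ (p - 1) * (C₂ + C₂) + 2 ^ (p - 1) * (C₁ + C₁)) * zetaSum (3 / 2) / p +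
        zetaSum ((q + 3) / 4) ^ 2 / q) := by
  refine iSup_le fun n => iSup_le fun m => iSup_le fun I => iSup_le fun J => ?_
  simp only [harmonicSeq_succ]
  have hrow (i : Fin n) : ∑ j, |incr12 f (I.1 i) (J.1 j)| ^ p ≤ 2 ^ (p - 1) * (C₂ + C₂) := by
    simpa only [incr12_flip] using hf₂.sum_abs_incr12_rpow_le hpq.lt.le (I.1 i) J.1 J.2
  have hcol (j : Fin m) : ∑ i, |incr12 f (I.1 i) (J.1 j)| ^ p ≤ 2 ^ (p - 1) * (C₁ + C₁) :=
    hf₁.sum_abs_incr12_rpow_le hpq.lt.le (J.1 j) I.1 I.2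
  rw [Finset.sum_congr rfl fun i _ => (ENNReal.ofReal_sum_of_nonneg fun j _ => by positivity).symm,
    ← ENNReal.ofReal_sum_of_nonneg fun i _ => Finset.sum_nonneg fun j _ => by positivity]
  exact ENNReal.ofReal_le_ofReal <| sum_sum_div_succ_mul_succ_le hpq _ (fun i j => abs_nonneg _)
    (by positivity [hf₂.nonneg]) (by positivity [hf₁.nonneg]) hrow hcol

theorem statement5_general (p : ℝ) (hp : 1 < p) (f : ℝ → ℝ → ℝ)
    (hV1 : ∃ C : ℝ, ∀ (y : ℝ) (n : ℕ) (I : Fin n → ℝ × ℝ), Nonoverlapping I →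
      ∑ i : Fin n, |incr1 f (I i) y| ^ p ≤ C)
    (hV2 : ∃ C : ℝ, ∀ (x : ℝ) (m : ℕ) (J : Fin m → ℝ × ℝ), Nonoverlapping J →
      ∑ j : Fin m, |incr2 f x (J j)| ^ p ≤ C) :
    Var1 harmonicSeq f + Var2 harmonicSeq f + Var12 harmonicSeq f < ⊤ := by
  obtain ⟨C₁, hf₁⟩ := hV1
  obtain ⟨C₂, hf₂⟩ := hV2
  have hpq := Real.HolderConjugate.conjExponent hp
  replace hf₂ : PVar1LE p (flip f) C₂ := hf₂
  rw [var2_eq_var1_flip]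
  exact ENNReal.add_lt_top.2 ⟨ENNReal.add_lt_top.2
    ⟨(var1_harmonicSeq_le hpq hf₁).trans_lt ENNReal.ofReal_lt_top,
      (var1_harmonicSeq_le hpq hf₂).trans_lt ENNReal.ofReal_lt_top⟩,
    (var12_harmonicSeq_le hpq hf₁ hf₂).trans_lt ENNReal.ofReal_lt_top⟩

/-- for every `p > 1`, `PBV_p ⊆ HBV`. -/
theorem statement5 (p : ℝ) (hp : 1 < p) (f : ℝ → ℝ → ℝ) (hper : Periodic2 f)
    (hV1 : ∃ C : ℝ, ∀ (y : ℝ) (n : ℕ) (I : Fin n → ℝ × ℝ), Nonoverlapping I →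
      ∑ i : Fin n, |incr1 f (I i) y| ^ p ≤ C)
    (hV2 : ∃ C : ℝ, ∀ (x : ℝ) (m : ℕ) (J : Fin m → ℝ × ℝ), Nonoverlapping J →
      ∑ j : Fin m, |incr2 f x (J j)| ^ p ≤ C) :
    Var1 harmonicSeq f + Var2 harmonicSeq f + Var12 harmonicSeq f < ⊤ :=
  statement5_general p hp f hV1 hV2
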